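/- For the partial-sum identity of ψ̂₁: for all ω ∈ ℝ, the sum over j ≥ 0 of |ψ̂₁(2^{-2j} ω)|^2 equals 0 if |ω| ≤ 1/2, equals sin²((π/2)v(2|ω|−1)) if 1/2 < |ω| < 1, and equals 1 if |ω| ≥ 1. -/

import Mathlib

noncomputable def meyerV (x : ℝ) : ℝ :=
  if x < 0 then 0
  else if x ≤ 1 then 35*x^4 - 84*x^5 + 70*x^6 - 20*x^7
  else 1

noncomputable def meyerB (x : ℝ) : ℝ :=
  if 1 ≤ |x| ∧ |x| ≤ 2 then Real.sin (Real.pi / 2 * meyerV (|x| - 1))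
  else if 2 < |x| ∧ |x| ≤ 4 then Real.cos (Real.pi / 2 * meyerV (|x| / 2 - 1))
  else 0

noncomputable def psi1hat (ω : ℝ) : ℝ := Real.sqrt (meyerB (2*ω) ^ 2 + meyerB ω ^ 2)

/-!
Write `f := meyerB ^ 2`, so that `|ψ̂₁ ω|² = f (2ω) + f ω`. The terms of the sum over `j` are
consecutive pairs of the dyadic series `∑ₖ f (2ω / 2ᵏ)`, which therefore has the same value.
Since `f` vanishes on `|x| ≤ 1` and on `|x| ≥ 4`, and `f x + f (2x) = sin² + cos² = 1` on
`1 ≤ |x| ≤ 2`, the dyadic series `∑ₖ f (x / 2ᵏ)` is `0` for `|x| ≤ 1`, is its first term `f x`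
for `1 ≤ |x| ≤ 2`, and is `1` for `|x| ≥ 2`, where its only nonzero terms are a pair
`f y + f (2y)` with `1 ≤ |y| < 2`.
-/

theorem Summable.tsum_two_mul_add_two_mul_add_one {G : Type*} [AddCommGroup G] [UniformSpace G]
    [IsUniformAddGroup G] [CompleteSpace G] [T2Space G] {a : ℕ → G} (ha : Summable a) :
    ∑' k, (a (2 * k) + a (2 * k + 1)) = ∑' k, a k := by
  have hinj : Function.Injective fun k : ℕ => 2 * k := mul_right_injective₀ two_ne_zero
  have heven := ha.comp_injective hinj
  have hodd := ha.comp_injective ((add_left_injective 1).comp hinj)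
  exact (heven.tsum_add hodd).trans (tsum_even_add_odd heven hodd)

section DyadicSeries

variable {f : ℝ → ℝ}

theorem summable_comp_div_two_pow (hf : ∀ x, |x| ≤ 1 → f x = 0) (x : ℝ) :
    Summable fun k : ℕ => f (x / 2 ^ k) := by
  obtain ⟨N, hN⟩ := pow_unbounded_of_one_lt |x| one_lt_two
  refine summable_of_ne_finset_zero (s := Finset.range N) fun k hk => hf _ ?_
  rw [abs_div, abs_pow, abs_two, div_le_one (by positivity)]
  exact hN.le.trans (pow_le_pow_right₀ one_le_two (by simpa using hk))

theorem tsum_comp_div_two_pow_eq_add (hf : ∀ x, |x| ≤ 1 → f x = 0) (x : ℝ) :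
    ∑' k : ℕ, f (x / 2 ^ k) = f x + ∑' k : ℕ, f (x / 2 / 2 ^ k) := by
  simp only [(summable_comp_div_two_pow hf x).tsum_eq_zero_add, pow_zero, div_one, pow_succ',
    div_div]

theorem tsum_comp_div_two_pow_of_abs_le_one (hf : ∀ x, |x| ≤ 1 → f x = 0) {x : ℝ}
    (hx : |x| ≤ 1) : ∑' k : ℕ, f (x / 2 ^ k) = 0 := by
  refine (tsum_congr fun k => hf _ ?_).trans tsum_zero
  rw [abs_div, abs_pow, abs_two]
  exact (div_le_self (abs_nonneg x) (one_le_pow₀ one_le_two)).trans hx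

theorem tsum_comp_div_two_pow_of_abs_le_two (hf : ∀ x, |x| ≤ 1 → f x = 0) {x : ℝ}
    (hx : |x| ≤ 2) : ∑' k : ℕ, f (x / 2 ^ k) = f x := by
  rw [tsum_comp_div_two_pow_eq_add hf, tsum_comp_div_two_pow_of_abs_le_one hf, add_zero]
  rw [abs_div, abs_two]
  linarith

theorem tsum_comp_div_two_pow_of_two_le_abs (hf : ∀ x, |x| ≤ 1 → f x = 0)
    (hf4 : ∀ x, 4 ≤ |x| → f x = 0) (hpair : ∀ x, 1 ≤ |x| → |x| ≤ 2 → f x + f (2 * x) = 1)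
    {x : ℝ} (hx : 2 ≤ |x|) : ∑' k : ℕ, f (x / 2 ^ k) = 1 := by
  obtain ⟨N, hN⟩ := pow_unbounded_of_one_lt |x| one_lt_two
  induction N generalizing x with
  | zero => simp only [pow_zero] at hN; linarith
  | succ n ih =>
    have habs : |x / 2| = |x| / 2 := by rw [abs_div, abs_two]
    rw [tsum_comp_div_two_pow_eq_add hf]
    by_cases h4 : |x| < 4
    · rw [tsum_comp_div_two_pow_of_abs_le_two hf (by linarith), add_comm,
        ← hpair (x / 2) (by linarith) (by linarith), mul_div_cancel₀ x two_ne_zero]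
    · rw [hf4 x (not_lt.mp h4), zero_add]
      exact ih (by linarith) (by rw [habs, div_lt_iff₀ two_pos, ← pow_succ]; exact hN)

theorem tsum_comp_div_two_pow (hf : ∀ x, |x| ≤ 1 → f x = 0) (hf4 : ∀ x, 4 ≤ |x| → f x = 0)
    (hpair : ∀ x, 1 ≤ |x| → |x| ≤ 2 → f x + f (2 * x) = 1) (x : ℝ) :
    ∑' k : ℕ, f (x / 2 ^ k) = if |x| ≤ 1 then 0 else if |x| < 2 then f x else 1 := by
  split_ifs with h1 h2
  · exact tsum_comp_div_two_pow_of_abs_le_one hf h1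
  · exact tsum_comp_div_two_pow_of_abs_le_two hf h2.le
  · exact tsum_comp_div_two_pow_of_two_le_abs hf hf4 hpair (not_lt.mp h2)

end DyadicSeries

theorem meyerB_eq_zero_of_abs_le_one {x : ℝ} (hx : |x| ≤ 1) : meyerB x = 0 := by
  rcases hx.eq_or_lt with h1 | h1
  · simp [meyerB, h1, meyerV]
  · rw [meyerB, if_neg (by intro h; linarith [h.1]), if_neg (by intro h; linarith [h.1])]

theorem meyerB_eq_zero_of_four_le_abs {x : ℝ} (hx : 4 ≤ |x|) : meyerB x = 0 := by
  rcases hx.eq_or_lt with h4 | h4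
  · norm_num [meyerB, ← h4, meyerV]
  · rw [meyerB, if_neg (by intro h; linarith [h.2]), if_neg (by intro h; linarith [h.2])]

theorem meyerB_of_one_le_abs_of_abs_le_two {x : ℝ} (h1 : 1 ≤ |x|) (h2 : |x| ≤ 2) :
    meyerB x = Real.sin (Real.pi / 2 * meyerV (|x| - 1)) :=
  if_pos ⟨h1, h2⟩

theorem meyerB_sq_add_meyerB_two_mul_sq {x : ℝ} (h1 : 1 ≤ |x|) (h2 : |x| ≤ 2) :
    meyerB x ^ 2 + meyerB (2 * x) ^ 2 = 1 := by
  have habs : |2 * x| = 2 * |x| := by rw [abs_mul, abs_two]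
  rcases h1.eq_or_lt with h1 | h1
  · rw [meyerB_eq_zero_of_abs_le_one h1.ge,
      meyerB_of_one_le_abs_of_abs_le_two (by linarith) (by linarith), habs, ← h1]
    norm_num [meyerV]
  · have hcos : meyerB (2 * x) = Real.cos (Real.pi / 2 * meyerV (|x| - 1)) := by
      rw [meyerB, if_neg (by intro h; linarith [h.2]), if_pos ⟨by linarith, by linarith⟩, habs,
        mul_div_cancel_left₀ _ two_ne_zero]
    rw [meyerB_of_one_le_abs_of_abs_le_two h1.le h2, hcos, Real.sin_sq_add_cos_sq]

theorem sq_abs_psi1hat (ω : ℝ) : |psi1hat ω| ^ 2 = meyerB (2 * ω) ^ 2 + meyerB ω ^ 2 := by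
  rw [sq_abs, psi1hat, Real.sq_sqrt (by positivity)]

theorem psi1hat_partial_sum (ω : ℝ) :
    ∑' j : ℕ, |psi1hat ((2:ℝ) ^ (-(2 * (j:ℤ))) * ω)| ^ 2 =
      if |ω| ≤ 1/2 then 0
      else if |ω| < 1 then Real.sin (Real.pi / 2 * meyerV (2 * |ω| - 1)) ^ 2
      else 1 := by
  have hf : ∀ x, |x| ≤ 1 → meyerB x ^ 2 = 0 := fun x hx => by
    rw [meyerB_eq_zero_of_abs_le_one hx, zero_pow two_ne_zero]
  have hf4 : ∀ x, 4 ≤ |x| → meyerB x ^ 2 = 0 := fun x hx => by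
    rw [meyerB_eq_zero_of_four_le_abs hx, zero_pow two_ne_zero]
  have hscale : ∀ j : ℕ, (2:ℝ) ^ (-(2 * (j:ℤ))) * ω = 2 * ω / 2 ^ (2 * j + 1) := fun j => by
    rw [zpow_neg, show 2 * (j:ℤ) = ((2 * j : ℕ) : ℤ) by push_cast; ring, zpow_natCast, pow_succ]
    field_simp
  calc ∑' j : ℕ, |psi1hat ((2:ℝ) ^ (-(2 * (j:ℤ))) * ω)| ^ 2
      = ∑' j : ℕ, (meyerB (2 * ω / 2 ^ (2 * j)) ^ 2 + meyerB (2 * ω / 2 ^ (2 * j + 1)) ^ 2) := by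
        refine tsum_congr fun j => ?_
        rw [sq_abs_psi1hat, hscale, pow_succ _ (2 * j), ← div_div, mul_div_cancel₀ _ two_ne_zero]
    _ = ∑' k : ℕ, meyerB (2 * ω / 2 ^ k) ^ 2 :=
        (summable_comp_div_two_pow hf (2 * ω)).tsum_two_mul_add_two_mul_add_one
    _ = if |2 * ω| ≤ 1 then 0 else if |2 * ω| < 2 then meyerB (2 * ω) ^ 2 else 1 :=
        tsum_comp_div_two_pow hf hf4 (fun _ => meyerB_sq_add_meyerB_two_mul_sq) (2 * ω)
    _ = _ := by
        have habs : |2 * ω| = 2 * |ω| := by rw [abs_mul, abs_two]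
        have hle : 2 * |ω| ≤ 1 ↔ |ω| ≤ 1 / 2 := by constructor <;> intro h <;> linarith
        have hlt : 2 * |ω| < 2 ↔ |ω| < 1 := by constructor <;> intro h <;> linarith
        simp only [habs, hle, hlt]
        split_ifs with hsmall hmid
        · rfl
        · rw [meyerB_of_one_le_abs_of_abs_le_two (by linarith) (by linarith), habs]
        · rfl
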